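/- arXiv:2209.05897 — 2 statements merged into one kernel-verified Lean document; each statement's English description precedes it below -/
import Mathlib

section
/- Let a ∈ ℝ, 0 < p < ∞ and 0 < q, r ≤ ∞. Then HL^{a,r}_{p,q}(Ω) is complete with respect to the quasi-norm ‖·‖_{HL^{a,r}_{p,q}}: if (f_n) is a sequence in HL^{a,r}_{p,q}(Ω) such that ‖f_n − f_m‖_{HL^{a,r}_{p,q}} → 0 as n, m → ∞, then there exists f ∈ HL^{a,r}_{p,q}(Ω) with ‖f_n − f‖_{HL^{a,r}_{p,q}} → 0 as n → ∞. -/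
open MeasureTheory ENNReal Set Filter Topology

noncomputable section

variable {X : Type*}

/-- The decreasing rearrangement `f*` of `f` with respect to `μ` :
`f*(s) = inf {α ≥ 0 : μ({x : |f(x)| > α}) ≤ s}`. -/
def rearr [MeasurableSpace X] (μ : Measure X) (f : X → ℝ) (s : ℝ) : ℝ≥0∞ :=
  sInf {α : ℝ≥0∞ | μ {x | α < ENNReal.ofReal |f x|} ≤ ENNReal.ofReal s}

/-- The averaged (maximal) rearrangement `f**(s) = (1/s)∫_0^s f*(t) dt`. -/
def rearrStar [MeasurableSpace X] (μ : Measure X) (f : X → ℝ) (s : ℝ) : ℝ≥0∞ :=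
  (ENNReal.ofReal s)⁻¹ * ∫⁻ t in Set.Ioc (0 : ℝ) s, rearr μ f t

/-- The Lorentz functional built from a rearrangement-type function `R`:
`(∫_0^∞ (t^{1/p} R(t))^r dt/t)^{1/r}` for `r < ∞`, and `sup_{t>0} t^{1/p} R(t)`
for `r = ∞` (when `p = ∞`, `1/p` is interpreted as `0`, which for `R = f*`
recovers the essential supremum of `|f|`). -/
def lorentzNormOf (R : ℝ → ℝ≥0∞) (p r : ℝ≥0∞) : ℝ≥0∞ :=
  if r = ∞ then ⨆ t : {t : ℝ // 0 < t}, ENNReal.ofReal (t.1 ^ p.toReal⁻¹) * R t.1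
  else (∫⁻ t in Set.Ioi (0 : ℝ),
      (ENNReal.ofReal (t ^ p.toReal⁻¹) * R t) ^ r.toReal / ENNReal.ofReal t) ^ r.toReal⁻¹

/-- The Lorentz quasi-norm `‖f‖_{L^{p,r}}`. -/
def lorentzNorm [MeasurableSpace X] (μ : Measure X) (p r : ℝ≥0∞) (f : X → ℝ) : ℝ≥0∞ :=
  lorentzNormOf (rearr μ f) p r

/-- The Lorentz norm `‖f‖*_{L^{p,r}}`, with `f*` replaced by `f**`. -/
def lorentzNormStar [MeasurableSpace X] (μ : Measure X) (p r : ℝ≥0∞) (f : X → ℝ) : ℝ≥0∞ :=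
  lorentzNormOf (rearrStar μ f) p r

/-- The annuli `A_u`, `u ≥ -1`:  `A_{-1} = {x ∈ Ω : |x| < 1/2}` and, for `u ≥ 0`,
`A_u = {x ∈ Ω : 2^{u-1} ≤ |x| < 2^u}`. -/
def annulus [Norm X] (Ω : Set X) (u : ℤ) : Set X :=
  if u = -1 then {x ∈ Ω | ‖x‖ < 1 / 2}
  else {x ∈ Ω | (2 : ℝ) ^ (u - 1) ≤ ‖x‖ ∧ ‖x‖ < (2 : ℝ) ^ u}

/-- The Herz-type functional built from a functional `L` on the blocks:
`(Σ_{u ≥ -1} (2^{ua} L(f χ_{A_u}))^q)^{1/q}` for `q < ∞`, with the sup-modification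
for `q = ∞`. -/
def herzNormWith {E : Type*} [Norm X] [Zero E] (Ω : Set X) (a : ℝ) (q : ℝ≥0∞)
    (L : (X → E) → ℝ≥0∞) (f : X → E) : ℝ≥0∞ :=
  if q = ∞ then
    ⨆ u : {u : ℤ // -1 ≤ u},
      ENNReal.ofReal ((2 : ℝ) ^ ((u.1 : ℝ) * a)) * L ((annulus Ω u.1).indicator f)
  else (∑' u : {u : ℤ // -1 ≤ u},
      (ENNReal.ofReal ((2 : ℝ) ^ ((u.1 : ℝ) * a)) * L ((annulus Ω u.1).indicator f)) ^ q.toReal)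
      ^ q.toReal⁻¹

/-- The non-homogeneous Lorentz–Herz quasi-norm `‖f‖_{HL^{a,r}_{p,q}}`. -/
def herzNorm [MeasurableSpace X] [Norm X] (μ : Measure X) (Ω : Set X) (a : ℝ)
    (p q r : ℝ≥0∞) (f : X → ℝ) : ℝ≥0∞ :=
  herzNormWith Ω a q (lorentzNorm μ p r) f

/-- The non-homogeneous Lorentz–Herz norm `‖f‖*_{HL^{a,r}_{p,q}}`, built from the
Lorentz norms `‖·‖*_{L^{p,r}}`. -/
def herzNormStar [MeasurableSpace X] [Norm X] (μ : Measure X) (Ω : Set X) (a : ℝ)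
    (p q r : ℝ≥0∞) (f : X → ℝ) : ℝ≥0∞ :=
  herzNormWith Ω a q (lorentzNormStar μ p r) f

/-- The conjugate exponent: `1/p + 1/p' = 1`, with `1' = ∞` and `∞' = 1`. -/
def conjExp (p : ℝ≥0∞) : ℝ≥0∞ :=
  if p = 1 then ∞ else if p = ∞ then 1 else ENNReal.ofReal (p.toReal / (p.toReal - 1))

/-- The quantity `(Σ_{u≥-1} (2^{ua} μ(A_u ∩ E)^{1/p})^q)^{(of the summands)}`,
i.e. `Σ_{u≥-1} 2^{uaq} μ(A_u ∩ E)^{q/p}` for `q < ∞`, with the sup-modification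
for `q = ∞`. -/
def herzSetNorm [MeasurableSpace X] [Norm X] (μ : Measure X) (Ω : Set X) (a : ℝ)
    (p q : ℝ≥0∞) (E : Set X) : ℝ≥0∞ :=
  if q = ∞ then
    ⨆ u : {u : ℤ // -1 ≤ u},
      ENNReal.ofReal ((2 : ℝ) ^ ((u.1 : ℝ) * a)) * μ (annulus Ω u.1 ∩ E) ^ p.toReal⁻¹
  else ∑' u : {u : ℤ // -1 ≤ u},
      (ENNReal.ofReal ((2 : ℝ) ^ ((u.1 : ℝ) * a)) * μ (annulus Ω u.1 ∩ E) ^ p.toReal⁻¹) ^ q.toReal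

/-- The Peetre K-functional for the couple of quasi-normed function spaces
determined by the functionals `n₀`, `n₁`. -/
def Kfun [MeasurableSpace X] (n₀ n₁ : (X → ℝ) → ℝ≥0∞) (t : ℝ) (f : X → ℝ) : ℝ≥0∞ :=
  ⨅ (g : X → ℝ) (_ : Measurable g) (_ : Measurable (f - g)),
    n₀ g + ENNReal.ofReal t * n₁ (f - g)

/-- The real interpolation quasi-norm `‖f‖_{(X₀,X₁)_{θ,q}}`. -/
def interpNorm [MeasurableSpace X] (n₀ n₁ : (X → ℝ) → ℝ≥0∞) (θ : ℝ) (q : ℝ≥0∞)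
    (f : X → ℝ) : ℝ≥0∞ :=
  if q = ∞ then ⨆ t : {t : ℝ // 0 < t}, ENNReal.ofReal (t.1 ^ (-θ)) * Kfun n₀ n₁ t.1 f
  else (∫⁻ t in Set.Ioi (0 : ℝ),
      (ENNReal.ofReal (t ^ (-θ)) * Kfun n₀ n₁ t f) ^ q.toReal / ENNReal.ofReal t) ^ q.toReal⁻¹

/-- Membership in the sum `X₀ + X₁` of the couple determined by `n₀`, `n₁`. -/
def inSum [MeasurableSpace X] (n₀ n₁ : (X → ℝ) → ℝ≥0∞) (f : X → ℝ) : Prop :=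
  ∃ g : X → ℝ, Measurable g ∧ Measurable (f - g) ∧ n₀ g < ∞ ∧ n₁ (f - g) < ∞

end
abbrev Euc (N : ℕ) : Type := EuclideanSpace ℝ (Fin N)

/-!
A Cauchy sequence for the Lorentz–Herz quasi-norm is Cauchy in measure on every annulus `A_u`:
if `μ {|h| > λ} > δ` then `h* ≥ λ` on `(0, δ]`, so `‖h χ_{A_u}‖_{L^{p,r}}` is bounded below by
the norm of `λ χ_{(0,δ]}`. A fast subsequence therefore converges a.e. on `Ω` (Borel–Cantelli).
Its pointwise limit `g` is the limit of the whole sequence by the Fatou property: `f*` is lower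
semicontinuous under a.e. convergence, and the Lorentz and Herz functionals are monotone integrals,
sums and suprema of it. Finally `g` lies in the space by the quasi-triangle inequality, which
follows from `(f + g)*(t) ≤ f*(t/2) + g*(t/2)` and the invariance of `dt/t` under dilations.
-/

section Rearrangement

variable {X : Type*} [MeasurableSpace X] {μ : Measure X} {f g : X → ℝ} {s t : ℝ}

variable (μ f s) in
theorem measure_rearr_lt_le :
    μ {x | rearr μ f s < ENNReal.ofReal |f x|} ≤ ENNReal.ofReal s := by
  set I := rearr μ f s
  rcases eq_or_ne I ∞ with hI | hI
  · simp [hI]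
  have hlevel : ∀ n : ℕ, μ {x | I + (n : ℝ≥0∞)⁻¹ < ENNReal.ofReal |f x|} ≤ ENNReal.ofReal s := by
    intro n
    obtain ⟨α, hα, hαlt⟩ := sInf_lt_iff.mp
      (ENNReal.lt_add_right hI (ENNReal.inv_ne_zero.2 (ENNReal.natCast_ne_top n)))
    exact (measure_mono fun x hx => hαlt.trans hx).trans hα
  have hunion : {x | I < ENNReal.ofReal |f x|}
      = ⋃ n : ℕ, {x | I + (n : ℝ≥0∞)⁻¹ < ENNReal.ofReal |f x|} := by
    ext x
    simp only [mem_ofPred_eq, mem_iUnion]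
    refine ⟨fun hx => ?_, fun ⟨_, hn⟩ => le_self_add.trans_lt hn⟩
    obtain ⟨n, hn⟩ := ENNReal.exists_inv_nat_lt (tsub_pos_of_lt hx).ne'
    exact ⟨n, lt_tsub_iff_left.1 hn⟩
  have hmono : Monotone fun n : ℕ => {x | I + (n : ℝ≥0∞)⁻¹ < ENNReal.ofReal |f x|} :=
    fun _ _ hmn _ hx =>
      (add_le_add_right (ENNReal.inv_le_inv.2 (Nat.cast_le.2 hmn)) _).trans_lt hx
  rw [hunion, hmono.measure_iUnion]
  exact iSup_le hlevel

theorem rearr_le_of_measure_le {α : ℝ≥0∞}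
    (h : μ {x | α < ENNReal.ofReal |f x|} ≤ ENNReal.ofReal s) :
    rearr μ f s ≤ α :=
  sInf_le h

theorem rearr_antitone : Antitone (rearr μ f) :=
  fun _ _ hst => sInf_le_sInf fun _ hα => hα.trans (ENNReal.ofReal_le_ofReal hst)

theorem rearr_add_le (hs : 0 ≤ s) (ht : 0 ≤ t) :
    rearr μ (f + g) (s + t) ≤ rearr μ f s + rearr μ g t := by
  refine rearr_le_of_measure_le ?_
  have hsub : {x | rearr μ f s + rearr μ g t < ENNReal.ofReal |(f + g) x|}
      ⊆ {x | rearr μ f s < ENNReal.ofReal |f x|} ∪ {x | rearr μ g t < ENNReal.ofReal |g x|} := by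
    intro x hx
    by_contra! hle
    simp only [mem_union, mem_ofPred_eq, not_or, not_lt] at hle
    refine hx.not_ge ((ENNReal.ofReal_le_ofReal (abs_add_le (f x) (g x))).trans ?_)
    rw [ENNReal.ofReal_add (abs_nonneg _) (abs_nonneg _)]
    exact add_le_add hle.1 hle.2
  calc μ _ ≤ _ := (measure_mono hsub).trans (measure_union_le _ _)
    _ ≤ ENNReal.ofReal s + ENNReal.ofReal t :=
      add_le_add (measure_rearr_lt_le μ f s) (measure_rearr_lt_le μ g t)
    _ = ENNReal.ofReal (s + t) := (ENNReal.ofReal_add hs ht).symm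

theorem indicator_le_rearr {l δ : ℝ} (h : ENNReal.ofReal δ < μ {x | l < |f x|}) :
    (Iic δ).indicator (fun _ => ENNReal.ofReal l) ≤ rearr μ f := by
  intro t
  by_cases ht : t ∈ Iic δ
  · rw [indicator_of_mem ht]
    by_contra! hlt
    refine h.not_ge ((measure_mono fun x hx => ?_).trans
      ((measure_rearr_lt_le μ f t).trans (ENNReal.ofReal_le_ofReal ht)))
    exact hlt.trans_le (ENNReal.ofReal_le_ofReal (le_of_lt hx))
  · simp [indicator_of_notMem ht]

theorem rearr_le_liminf {h : ℕ → X → ℝ} {H : X → ℝ}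
    (hae : ∀ᵐ x ∂μ, Tendsto (h · x) atTop (𝓝 (H x))) (s : ℝ) :
    rearr μ H s ≤ liminf (fun k => rearr μ (h k) s) atTop := by
  refine le_of_forall_gt_imp_ge_of_dense fun β hβ => rearr_le_of_measure_le ?_
  have hfreq : ∃ᶠ k in atTop, rearr μ (h k) s < β :=
    frequently_lt_of_liminf_lt (by isBoundedDefault) hβ
  set B : ℕ → Set X := fun n => ⋂ k ≥ n, {x | β < ENNReal.ofReal |h k x|}
  have hB : ∀ n, μ (B n) ≤ ENNReal.ofReal s := by
    intro n
    obtain ⟨k, hk, hnk⟩ := (hfreq.and_eventually (eventually_ge_atTop n)).exists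
    exact (measure_mono fun x hx => hk.trans (mem_iInter₂.1 hx k hnk)).trans
      (measure_rearr_lt_le μ (h k) s)
  have hBmono : Monotone B :=
    fun m n hmn x hx => mem_iInter₂.2 fun k hk => mem_iInter₂.1 hx k (hmn.trans hk)
  have hsub : {x | β < ENNReal.ofReal |H x|} ≤ᵐ[μ] ⋃ n, B n := by
    filter_upwards [hae] with x hx hxβ
    have hconv : Tendsto (fun k => ENNReal.ofReal |h k x|) atTop (𝓝 (ENNReal.ofReal |H x|)) :=
      ((ENNReal.continuous_ofReal.comp continuous_abs).tendsto _).comp hx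
    obtain ⟨n, hn⟩ := (hconv.eventually_const_lt hxβ).exists_forall_of_atTop
    exact mem_iUnion.2 ⟨n, mem_iInter₂.2 hn⟩
  calc μ {x | β < ENNReal.ofReal |H x|} ≤ μ (⋃ n, B n) := measure_mono_ae hsub
    _ = ⨆ n, μ (B n) := hBmono.measure_iUnion
    _ ≤ ENNReal.ofReal s := iSup_le hB

end Rearrangement

namespace ENNReal

theorem le_liminf_comp {g : ℝ≥0∞ → ℝ≥0∞} (hg : Monotone g) (hgc : Continuous g)
    {y : ℝ≥0∞} {x : ℕ → ℝ≥0∞} (h : y ≤ liminf x atTop) :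
    g y ≤ liminf (fun k => g (x k)) atTop :=
  (hg h).trans_eq (hg.map_liminf_of_continuousAt x hgc.continuousAt)

theorem iSup_mul_le_liminf {ι : Type*} {c : ι → ℝ≥0∞} (hc : ∀ i, c i ≠ ∞)
    {y : ι → ℝ≥0∞} {x : ℕ → ι → ℝ≥0∞} (h : ∀ i, y i ≤ liminf (x · i) atTop) :
    ⨆ i, c i * y i ≤ liminf (fun k => ⨆ i, c i * x k i) atTop :=
  (iSup_mono fun i => le_liminf_comp (fun _ _ hab => mul_le_mul_right hab _)
    (ENNReal.continuous_const_mul (hc i)) (h i)).trans iSup_liminf_le_liminf_iSup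

theorem tsum_liminf_le {ι : Type*} [Countable ι] (x : ℕ → ι → ℝ≥0∞) :
    ∑' i, liminf (x · i) atTop ≤ liminf (fun k => ∑' i, x k i) atTop := by
  let _ : MeasurableSpace ι := ⊤
  have : MeasurableSingletonClass ι := ⟨fun _ => trivial⟩
  simp_rw [← lintegral_count]
  exact lintegral_liminf_le fun _ => measurable_of_countable _

theorem rpow_le_mul_rpow_add_rpow_of_le {x y z K : ℝ≥0∞} (p : ℝ≥0∞) (h : x ≤ K * (y + z)) :
    x ^ p.toReal⁻¹ ≤ K ^ p.toReal⁻¹ * LpAddConst p * (y ^ p.toReal⁻¹ + z ^ p.toReal⁻¹) :=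
  calc x ^ p.toReal⁻¹ ≤ (K * (y + z)) ^ p.toReal⁻¹ := by gcongr
    _ = K ^ p.toReal⁻¹ * (y + z) ^ p.toReal⁻¹ := ENNReal.mul_rpow_of_nonneg _ _ (by positivity)
    _ ≤ K ^ p.toReal⁻¹ * (LpAddConst p * (y ^ p.toReal⁻¹ + z ^ p.toReal⁻¹)) := by
      gcongr; exact rpow_add_le_mul_rpow_add_rpow'' y z
    _ = _ := (mul_assoc _ _ _).symm

theorem rpow_toReal_le_mul_rpow_add_rpow_of_le {x y z K : ℝ≥0∞} (p : ℝ≥0∞)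
    (h : x ≤ K * (y + z)) :
    x ^ p.toReal ≤ K ^ p.toReal * LpAddConst p⁻¹ * (y ^ p.toReal + z ^ p.toReal) := by
  simpa only [toReal_inv, inv_inv] using rpow_le_mul_rpow_add_rpow_of_le p⁻¹ h

end ENNReal

theorem setLIntegral_Ioi_eq_mul_comp_mul_left (G : ℝ → ℝ≥0∞) {c : ℝ} (hc : 0 < c) :
    ∫⁻ t in Ioi 0, G t = ENNReal.ofReal c * ∫⁻ s in Ioi 0, G (c * s) := by
  have he : MeasurableEmbedding (c * ·) := measurableEmbedding_mulLeft₀ hc.ne'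
  have hpre : (c * ·) ⁻¹' Ioi (0 : ℝ) = Ioi 0 := by
    ext s; simp [mul_pos_iff_of_pos_left hc]
  have hmap : Measure.map (c * ·) (volume.restrict (Ioi 0)) =
      (ENNReal.ofReal c)⁻¹ • volume.restrict (Ioi 0) := by
    conv_lhs => rw [← hpre]
    rw [← he.restrict_map, Real.map_volume_mul_left hc.ne', Measure.restrict_smul,
      abs_of_pos (inv_pos.2 hc), ENNReal.ofReal_inv_of_pos hc]
  rw [← he.lintegral_map, hmap, lintegral_smul_measure, smul_eq_mul, ← mul_assoc,
    ENNReal.mul_inv_cancel (ENNReal.ofReal_pos.2 hc).ne' ENNReal.ofReal_ne_top, one_mul]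

section Lorentz

variable {X : Type*} [MeasurableSpace X] {μ : Measure X} {p r : ℝ≥0∞}

theorem lorentzNormOf_mono {R R' : ℝ → ℝ≥0∞} (h : ∀ t, 0 < t → R t ≤ R' t) :
    lorentzNormOf R p r ≤ lorentzNormOf R' p r := by
  unfold lorentzNormOf
  split_ifs
  · exact iSup_mono fun t => mul_le_mul_right (h t t.2) _
  · refine ENNReal.rpow_le_rpow (setLIntegral_mono' measurableSet_Ioi fun t ht => ?_)
      (by positivity)
    gcongr
    exact h t ht

variable (p r) in
theorem lorentzNormOf_add_le :
    ∃ C : ℝ≥0∞, C ≠ ∞ ∧ ∀ R₁ R₂ : ℝ → ℝ≥0∞, Measurable R₁ →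
      lorentzNormOf (R₁ + R₂) p r ≤ C * (lorentzNormOf R₁ p r + lorentzNormOf R₂ p r) := by
  rcases eq_or_ne r ∞ with hr | hr
  · refine ⟨1, one_ne_top, fun R₁ R₂ _ => ?_⟩
    simp only [lorentzNormOf, if_pos hr, one_mul]
    refine iSup_le fun t => ?_
    rw [Pi.add_apply, mul_add]
    exact add_le_add (le_iSup_of_le t le_rfl) (le_iSup_of_le t le_rfl)
  set C₁ := LpAddConst r⁻¹
  have hC₁ : C₁ ≠ ∞ := (LpAddConst_lt_top _).ne
  refine ⟨C₁ ^ r.toReal⁻¹ * LpAddConst r,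
    mul_ne_top (rpow_ne_top_of_nonneg (by positivity) hC₁) (LpAddConst_lt_top _).ne,
    fun R₁ R₂ hR₁ => ?_⟩
  simp only [lorentzNormOf, if_neg hr]
  refine ENNReal.rpow_le_mul_rpow_add_rpow_of_le r ?_
  set w : ℝ → ℝ≥0∞ := fun t => ENNReal.ofReal (t ^ p.toReal⁻¹)
  have hpt : ∀ t, (w t * (R₁ + R₂) t) ^ r.toReal / ENNReal.ofReal t ≤
      C₁ * ((w t * R₁ t) ^ r.toReal / ENNReal.ofReal t +
        (w t * R₂ t) ^ r.toReal / ENNReal.ofReal t) := fun t => by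
    have hsplit : w t * (R₁ + R₂) t ≤ 1 * (w t * R₁ t + w t * R₂ t) := by
      rw [one_mul, Pi.add_apply, mul_add]
    have := ENNReal.rpow_toReal_le_mul_rpow_add_rpow_of_le r hsplit
    rw [one_rpow, one_mul] at this
    rw [← ENNReal.add_div, ← mul_div_assoc]
    exact ENNReal.div_le_div_right this _
  calc _ ≤ ∫⁻ t in Ioi 0, C₁ * ((w t * R₁ t) ^ r.toReal / ENNReal.ofReal t +
        (w t * R₂ t) ^ r.toReal / ENNReal.ofReal t) := lintegral_mono hpt
    _ = _ := by rw [lintegral_const_mul' _ _ hC₁, lintegral_add_left (by fun_prop)]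

-- `r ≠ 0` matters: `lorentzNormOf R p 0 = 1` for every `R`, since `(0 : ℝ)⁻¹ = 0`.
theorem lorentzNormOf_comp_div (R : ℝ → ℝ≥0∞) {c : ℝ} (hc : 0 < c) (hr : r ≠ 0) :
    lorentzNormOf (fun t => R (t / c)) p r =
      ENNReal.ofReal (c ^ p.toReal⁻¹) * lorentzNormOf R p r := by
  set w : ℝ → ℝ≥0∞ := fun t => ENNReal.ofReal (t ^ p.toReal⁻¹)
  have hw : ∀ s, 0 < s → w (c * s) = ENNReal.ofReal (c ^ p.toReal⁻¹) * w s := fun s hs => by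
    simp only [w, Real.mul_rpow hc.le hs.le, ENNReal.ofReal_mul (Real.rpow_nonneg hc.le _)]
  have hdiv : ∀ s, c * s / c = s := fun s => mul_div_cancel_left₀ s hc.ne'
  rcases eq_or_ne r ∞ with hr' | hr'
  · simp only [lorentzNormOf, if_pos hr', ENNReal.mul_iSup]
    let e : {s : ℝ // 0 < s} ≃ {t : ℝ // 0 < t} :=
      { toFun := fun s => ⟨c * s, mul_pos hc s.2⟩
        invFun := fun t => ⟨t / c, div_pos t.2 hc⟩
        left_inv := fun s => Subtype.ext (hdiv s)
        right_inv := fun t => Subtype.ext (mul_div_cancel₀ _ hc.ne') }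
    rw [← e.iSup_comp]
    refine iSup_congr fun s => ?_
    change w (c * s) * R (c * s / c) = _
    rw [hdiv, hw s s.2, mul_assoc]
  simp only [lorentzNormOf, if_neg hr']
  set ρ := r.toReal
  have hρ : 0 < ρ := ENNReal.toReal_pos hr hr'
  set k := ENNReal.ofReal (c ^ p.toReal⁻¹) ^ ρ
  have hpt : ∀ s ∈ Ioi (0 : ℝ), (w (c * s) * R (c * s / c)) ^ ρ / ENNReal.ofReal (c * s) =
      (ENNReal.ofReal c)⁻¹ * (k * ((w s * R s) ^ ρ / ENNReal.ofReal s)) := fun s hs => by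
    rw [hdiv, hw s hs, ENNReal.ofReal_mul hc.le, mul_assoc, ENNReal.mul_rpow_of_nonneg _ _ hρ.le,
      div_eq_mul_inv, div_eq_mul_inv, ENNReal.mul_inv (Or.inr ofReal_ne_top) (Or.inl ofReal_ne_top)]
    ring
  have hc0 : ENNReal.ofReal c ≠ 0 := (ENNReal.ofReal_pos.2 hc).ne'
  rw [setLIntegral_Ioi_eq_mul_comp_mul_left _ hc, setLIntegral_congr_fun measurableSet_Ioi hpt,
    lintegral_const_mul' _ _ (ENNReal.inv_ne_top.2 hc0),
    lintegral_const_mul' _ _ (rpow_ne_top_of_nonneg hρ.le ofReal_ne_top), ← mul_assoc,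
    ENNReal.mul_inv_cancel hc0 ofReal_ne_top, one_mul,
    ENNReal.mul_rpow_of_nonneg _ _ (inv_nonneg.2 hρ.le), ENNReal.rpow_rpow_inv hρ.ne']

variable (p r) in
theorem lorentzNormOf_le_liminf {R : ℝ → ℝ≥0∞} {Rk : ℕ → ℝ → ℝ≥0∞}
    (hRk : ∀ k, Measurable (Rk k)) (h : ∀ t, 0 < t → R t ≤ liminf (Rk · t) atTop) :
    lorentzNormOf R p r ≤ liminf (fun k => lorentzNormOf (Rk k) p r) atTop := by
  rcases eq_or_ne r ∞ with hr | hr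
  · simp only [lorentzNormOf, if_pos hr]
    exact ENNReal.iSup_mul_le_liminf (fun _ => ofReal_ne_top) fun t => h t t.2
  simp only [lorentzNormOf, if_neg hr]
  refine ENNReal.le_liminf_comp (ENNReal.monotone_rpow_of_nonneg (by positivity))
    ENNReal.continuous_rpow_const ?_
  refine (setLIntegral_mono' measurableSet_Ioi fun t ht => ?_).trans
    (lintegral_liminf_le fun k => by fun_prop)
  refine ENNReal.le_liminf_comp (g := fun y => (ENNReal.ofReal (t ^ p.toReal⁻¹) * y) ^ r.toReal /
    ENNReal.ofReal t) (fun _ _ hab => ENNReal.div_le_div_right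
      (ENNReal.rpow_le_rpow (mul_le_mul_right hab _) toReal_nonneg) _) ?_ (h t ht)
  exact (ENNReal.continuous_div_const _ (ENNReal.ofReal_pos.2 ht).ne').comp
    (ENNReal.continuous_rpow_const.comp (ENNReal.continuous_const_mul ofReal_ne_top))

variable (p r) in
theorem lorentzNorm_le_liminf {h : ℕ → X → ℝ} {H : X → ℝ}
    (hae : ∀ᵐ x ∂μ, Tendsto (h · x) atTop (𝓝 (H x))) :
    lorentzNorm μ p r H ≤ liminf (fun k => lorentzNorm μ p r (h k)) atTop :=
  lorentzNormOf_le_liminf p r (fun _ => rearr_antitone.measurable) fun t _ => rearr_le_liminf hae t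

variable (μ p) in
theorem lorentzNorm_add_le (hr : r ≠ 0) :
    ∃ C : ℝ≥0∞, C ≠ ∞ ∧ ∀ f g : X → ℝ,
      lorentzNorm μ p r (f + g) ≤ C * (lorentzNorm μ p r f + lorentzNorm μ p r g) := by
  obtain ⟨C, hC, hadd⟩ := lorentzNormOf_add_le p r
  refine ⟨C * ENNReal.ofReal (2 ^ p.toReal⁻¹), mul_ne_top hC ofReal_ne_top, fun f g => ?_⟩
  calc lorentzNorm μ p r (f + g)
      ≤ lorentzNormOf ((fun t => rearr μ f (t / 2)) + fun t => rearr μ g (t / 2)) p r :=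
        lorentzNormOf_mono fun t ht => by
          simpa using rearr_add_le (μ := μ) (f := f) (g := g) (half_pos ht).le (half_pos ht).le
    _ ≤ C * (lorentzNormOf (fun t => rearr μ f (t / 2)) p r +
          lorentzNormOf (fun t => rearr μ g (t / 2)) p r) :=
        hadd _ _ (rearr_antitone.measurable.comp (measurable_id.div_const 2))
    _ = _ := by
      rw [lorentzNormOf_comp_div _ two_pos hr, lorentzNormOf_comp_div _ two_pos hr, lorentzNorm,
        lorentzNorm]
      ring

variable (p r) in
theorem lorentzNormOf_indicator_pos {l δ : ℝ} (hl : 0 < l) (hδ : 0 < δ) :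
    0 < lorentzNormOf ((Iic δ).indicator fun _ => ENNReal.ofReal l) p r := by
  have hpos : ∀ t ∈ Ioc 0 δ, 0 < ENNReal.ofReal (t ^ p.toReal⁻¹) *
      (Iic δ).indicator (fun _ => ENNReal.ofReal l) t := fun t ht => by
    rw [indicator_of_mem (show t ∈ Iic δ from ht.2)]
    exact ENNReal.mul_pos (ENNReal.ofReal_pos.2 (Real.rpow_pos_of_pos ht.1 _)).ne'
      (ENNReal.ofReal_pos.2 hl).ne'
  rcases eq_or_ne r ∞ with hr' | hr'
  · simp only [lorentzNormOf, if_pos hr']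
    exact (hpos δ ⟨hδ, le_rfl⟩).trans_le (le_iSup_of_le ⟨δ, hδ⟩ le_rfl)
  simp only [lorentzNormOf, if_neg hr']
  refine ENNReal.rpow_pos_of_nonneg ?_ (by positivity)
  rw [setLIntegral_pos_iff (by fun_prop (disch := exact measurableSet_Iic))]
  have hvol : ENNReal.ofReal δ = volume (Ioc 0 δ) := by simp
  refine (ENNReal.ofReal_pos.2 hδ).trans_le (hvol.le.trans (measure_mono fun t ht => ?_))
  exact ⟨(ENNReal.div_pos (ENNReal.rpow_pos_of_nonneg (hpos t ht) toReal_nonneg).ne'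
    ofReal_ne_top).ne', ht.1⟩

theorem measure_lt_abs_le_of_lorentzNorm_lt {f : X → ℝ} {l δ : ℝ}
    (h : lorentzNorm μ p r f < lorentzNormOf ((Iic δ).indicator fun _ => ENNReal.ofReal l) p r) :
    μ {x | l < |f x|} ≤ ENNReal.ofReal δ := by
  by_contra! hμ
  exact h.not_ge (lorentzNormOf_mono fun t _ => indicator_le_rearr hμ t)

end Lorentz

section Herz

variable {X : Type*}

theorem annulus_subset [Norm X] (Ω : Set X) (u : ℤ) : annulus Ω u ⊆ Ω := by
  unfold annulus
  split_ifs <;> exact fun x hx => hx.1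

theorem subset_iUnion_annulus [SeminormedAddGroup X] (Ω : Set X) :
    Ω ⊆ ⋃ n : ℕ, annulus Ω (n - 1) := by
  intro x hx
  rcases lt_or_ge ‖x‖ (1 / 2) with hsmall | hlarge
  · exact mem_iUnion.2 ⟨0, by simpa [annulus, hx] using hsmall⟩
  obtain ⟨m, hm₁, hm₂⟩ := exists_mem_Ico_zpow (hlarge.trans_lt' (by norm_num)) one_lt_two
  have hm : -1 ≤ m := by
    by_contra! hm
    have : (2 : ℝ) ^ (m + 1) ≤ 2 ^ (-1 : ℤ) := zpow_le_zpow_right₀ one_le_two (by omega)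
    norm_num at this
    linarith
  refine mem_iUnion.2 ⟨(m + 2).toNat, ?_⟩
  rw [show ((m + 2).toNat : ℤ) - 1 = m + 1 by omega]
  simp only [annulus, show m + 1 ≠ -1 by omega, if_false, add_sub_cancel_right]
  exact ⟨hx, hm₁, hm₂⟩

variable [Norm X] (Ω : Set X) (a : ℝ) (q : ℝ≥0∞)

theorem le_herzNormWith {E : Type*} [Zero E] (hq : q ≠ 0) (L : (X → E) → ℝ≥0∞) (f : X → E)
    {u : ℤ} (hu : -1 ≤ u) :
    ENNReal.ofReal (2 ^ ((u : ℝ) * a)) * L ((annulus Ω u).indicator f) ≤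
      herzNormWith Ω a q L f := by
  rcases eq_or_ne q ∞ with hq' | hq'
  · rw [herzNormWith, if_pos hq']
    exact le_iSup_of_le (⟨u, hu⟩ : {u : ℤ // -1 ≤ u}) le_rfl
  rw [herzNormWith, if_neg hq']
  have hρ : q.toReal ≠ 0 := (ENNReal.toReal_pos hq hq').ne'
  refine (ENNReal.rpow_rpow_inv hρ _).symm.le.trans (ENNReal.rpow_le_rpow ?_ (by positivity))
  exact ENNReal.le_tsum (f := fun v : {v : ℤ // -1 ≤ v} =>
    (ENNReal.ofReal (2 ^ ((v.1 : ℝ) * a)) * L ((annulus Ω v.1).indicator f)) ^ q.toReal) ⟨u, hu⟩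

theorem herzNormWith_le_liminf {E : Type*} [Zero E] {L : (X → E) → ℝ≥0∞} {F : X → E}
    {Fk : ℕ → X → E}
    (h : ∀ u, L ((annulus Ω u).indicator F) ≤
      liminf (fun k => L ((annulus Ω u).indicator (Fk k))) atTop) :
    herzNormWith Ω a q L F ≤ liminf (fun k => herzNormWith Ω a q L (Fk k)) atTop := by
  rcases eq_or_ne q ∞ with hq | hq
  · simp only [herzNormWith, if_pos hq]
    exact ENNReal.iSup_mul_le_liminf (fun _ => ofReal_ne_top) fun u => h u.1
  simp only [herzNormWith, if_neg hq]
  refine ENNReal.le_liminf_comp (ENNReal.monotone_rpow_of_nonneg (by positivity))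
    ENNReal.continuous_rpow_const ?_
  refine (ENNReal.tsum_le_tsum fun u => ?_).trans (ENNReal.tsum_liminf_le _)
  exact ENNReal.le_liminf_comp (ENNReal.monotone_rpow_of_nonneg toReal_nonneg)
    ENNReal.continuous_rpow_const (ENNReal.le_liminf_comp (fun _ _ hab => mul_le_mul_right hab _)
      (ENNReal.continuous_const_mul ofReal_ne_top) (h u.1))

theorem herzNormWith_add_le {E : Type*} [AddZeroClass E] {L : (X → E) → ℝ≥0∞} {K : ℝ≥0∞}
    (hK : K ≠ ∞) (hL : ∀ f g, L (f + g) ≤ K * (L f + L g)) :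
    ∃ C : ℝ≥0∞, C ≠ ∞ ∧ ∀ f g : X → E,
      herzNormWith Ω a q L (f + g) ≤ C * (herzNormWith Ω a q L f + herzNormWith Ω a q L g) := by
  set c : {u : ℤ // -1 ≤ u} → ℝ≥0∞ := fun u => ENNReal.ofReal (2 ^ ((u.1 : ℝ) * a))
  have hterm : ∀ u f g, c u * L ((annulus Ω u.1).indicator (f + g)) ≤
      K * (c u * L ((annulus Ω u.1).indicator f) + c u * L ((annulus Ω u.1).indicator g)) := by
    intro u f g
    rw [indicator_add']
    calc _ ≤ c u * (K * (L ((annulus Ω u.1).indicator f) + L ((annulus Ω u.1).indicator g))) :=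
          mul_le_mul_right (hL _ _) _
      _ = _ := by ring
  rcases eq_or_ne q ∞ with hq | hq
  · refine ⟨K, hK, fun f g => ?_⟩
    simp only [herzNormWith, if_pos hq]
    refine iSup_le fun u => (hterm u f g).trans ?_
    gcongr <;> exact le_iSup_of_le u le_rfl
  set C₁ := K ^ q.toReal * LpAddConst q⁻¹
  have hC₁ : C₁ ≠ ∞ :=
    mul_ne_top (rpow_ne_top_of_nonneg toReal_nonneg hK) (LpAddConst_lt_top _).ne
  refine ⟨C₁ ^ q.toReal⁻¹ * LpAddConst q,
    mul_ne_top (rpow_ne_top_of_nonneg (by positivity) hC₁) (LpAddConst_lt_top _).ne,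
    fun f g => ?_⟩
  simp only [herzNormWith, if_neg hq]
  refine ENNReal.rpow_le_mul_rpow_add_rpow_of_le q ?_
  rw [← ENNReal.tsum_add, ← ENNReal.tsum_mul_left]
  exact ENNReal.tsum_le_tsum fun u =>
    ENNReal.rpow_toReal_le_mul_rpow_add_rpow_of_le q (hterm u f g)

variable [MeasurableSpace X] (μ : Measure X) (p r : ℝ≥0∞)

theorem herzNorm_le_liminf {h : ℕ → X → ℝ} {H : X → ℝ}
    (hae : ∀ᵐ x ∂μ, x ∈ Ω → Tendsto (h · x) atTop (𝓝 (H x))) :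
    herzNorm μ Ω a p q r H ≤ liminf (fun k => herzNorm μ Ω a p q r (h k)) atTop := by
  refine herzNormWith_le_liminf Ω a q fun u => lorentzNorm_le_liminf p r ?_
  filter_upwards [hae] with x hx
  by_cases hxu : x ∈ annulus Ω u
  · simpa only [indicator_of_mem hxu] using hx (annulus_subset Ω u hxu)
  · simpa only [indicator_of_notMem hxu] using tendsto_const_nhds

theorem herzNorm_add_le (hr : r ≠ 0) :
    ∃ C : ℝ≥0∞, C ≠ ∞ ∧ ∀ f g : X → ℝ,
      herzNorm μ Ω a p q r (f + g) ≤ C * (herzNorm μ Ω a p q r f + herzNorm μ Ω a p q r g) := by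
  obtain ⟨K, hK, hL⟩ := lorentzNorm_add_le μ p hr
  exact herzNormWith_add_le Ω a q hK hL

theorem measure_annulus_inter_le_of_herzNorm_lt (hq : q ≠ 0) {u : ℤ}
    (hu : -1 ≤ u) {f : X → ℝ} {l δ : ℝ}
    (h : herzNorm μ Ω a p q r f < ENNReal.ofReal (2 ^ ((u : ℝ) * a)) *
      lorentzNormOf ((Iic δ).indicator fun _ => ENNReal.ofReal l) p r) :
    μ (annulus Ω u ∩ {x | l < |f x|}) ≤ ENNReal.ofReal δ := by
  have hc : ENNReal.ofReal (2 ^ ((u : ℝ) * a)) ≠ 0 := (ENNReal.ofReal_pos.2 (by positivity)).ne'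
  have hlt := (le_herzNormWith Ω a q hq (lorentzNorm μ p r) f hu).trans_lt h
  refine (measure_mono fun x hx => ?_).trans (measure_lt_abs_le_of_lorentzNorm_lt
    ((ENNReal.mul_lt_mul_iff_right hc ofReal_ne_top).1 hlt))
  simpa [indicator_of_mem hx.1] using hx.2

end Herz

section Completeness

theorem cauchySeq_of_eventually_dist_le_geometric_two {α : Type*} [PseudoMetricSpace α]
    {v : ℕ → α} (h : ∀ᶠ k in atTop, dist (v k) (v (k + 1)) ≤ 2⁻¹ ^ k) : CauchySeq v :=
  cauchySeq_of_summable_dist <| Summable.of_norm_bounded_eventually_nat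
    (summable_geometric_of_lt_one (r := (2⁻¹ : ℝ)) (by norm_num) (by norm_num))
    (h.mono fun _ hk => by rwa [Real.norm_of_nonneg dist_nonneg])

variable {X : Type*} [MeasurableSpace X] {μ : Measure X}

theorem ae_cauchySeq_of_measure_le_geometric_two {u : ℕ → X → ℝ} {S : Set X} {i : ℕ}
    (h : ∀ k ≥ i, μ (S ∩ {x | (2⁻¹ : ℝ) ^ k < |u (k + 1) x - u k x|}) ≤ ENNReal.ofReal (2⁻¹ ^ k)) :
    ∀ᵐ x ∂μ, x ∈ S → CauchySeq (u · x) := by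
  set B : ℕ → Set X := fun j => S ∩ {x | (2⁻¹ : ℝ) ^ (j + i) < |u (j + i + 1) x - u (j + i) x|}
  have hsum : Summable fun j : ℕ => (2⁻¹ : ℝ) ^ (j + i) :=
    (summable_nat_add_iff i).2 (summable_geometric_of_lt_one (by norm_num) (by norm_num))
  have hB : ∑' j, μ (B j) ≠ ∞ := by
    refine ne_top_of_le_ne_top ?_ (ENNReal.tsum_le_tsum fun j => h (j + i) le_add_self)
    rw [← ENNReal.ofReal_tsum_of_nonneg (fun _ => by positivity) hsum]
    exact ofReal_ne_top
  filter_upwards [ae_eventually_notMem hB] with x hx hxS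
  refine cauchySeq_of_eventually_dist_le_geometric_two ?_
  rw [← map_add_atTop_eq_nat i, eventually_map]
  filter_upwards [hx] with j hj
  rw [Real.dist_eq, abs_sub_comm]
  by_contra! hlt
  exact hj ⟨hxS, hlt⟩

theorem exists_subseq_ae_cauchySeq {F : (X → ℝ) → ℝ≥0∞} {A : ℕ → Set X}
    (hsmall : ∀ (n : ℕ) (l δ : ℝ), 0 < l → 0 < δ → ∃ ε > 0, ∀ h : X → ℝ, F h < ε →
      μ (A n ∩ {x | l < |h x|}) ≤ ENNReal.ofReal δ)
    {f : ℕ → X → ℝ} (hcauchy : ∀ ε : ℝ≥0∞, 0 < ε → ∃ M : ℕ, ∀ m n : ℕ, M ≤ m → M ≤ n →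
      F (f m - f n) < ε) :
    ∃ φ : ℕ → ℕ, StrictMono φ ∧ ∀ᵐ x ∂μ, x ∈ ⋃ n, A n → CauchySeq fun k => f (φ k) x := by
  have hstep : ∀ k, ∃ M, ∀ m ≥ M, ∀ n ≥ m, ∀ i ≤ k,
      μ (A i ∩ {x | (2⁻¹ : ℝ) ^ k < |f n x - f m x|}) ≤ ENNReal.ofReal (2⁻¹ ^ k) := by
    intro k
    choose ε hε hεA using fun i => hsmall i (2⁻¹ ^ k) (2⁻¹ ^ k) (by positivity) (by positivity)
    obtain ⟨M, hM⟩ := hcauchy ((Finset.range (k + 1)).inf ε)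
      ((Finset.lt_inf_iff ENNReal.zero_lt_top).2 fun i _ => hε i)
    exact ⟨M, fun m hm n hn i hi => hεA i _ ((hM n m (hm.trans hn) hm).trans_le
      (Finset.inf_le (Finset.mem_range.2 (Nat.lt_succ_of_le hi))))⟩
  obtain ⟨φ, hφ, hφM⟩ := extraction_forall_of_eventually' hstep
  have hae : ∀ i, ∀ᵐ x ∂μ, x ∈ A i → CauchySeq fun k => f (φ k) x := fun i =>
    ae_cauchySeq_of_measure_le_geometric_two (i := i) fun k hk =>
      hφM k (φ (k + 1)) (hφ.monotone k.le_succ) i hk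
  refine ⟨φ, hφ, ?_⟩
  filter_upwards [ae_all_iff.2 hae] with x hx hxA
  obtain ⟨i, hi⟩ := mem_iUnion.1 hxA
  exact hx i hi

theorem lt_top_and_tendsto_of_fatou {F : (X → ℝ) → ℝ≥0∞} {S : Set X}
    (hfatou : ∀ (h : ℕ → X → ℝ) (H : X → ℝ),
      (∀ᵐ x ∂μ, x ∈ S → Tendsto (h · x) atTop (𝓝 (H x))) → F H ≤ liminf (fun k => F (h k)) atTop)
    {C : ℝ≥0∞} (hC : C ≠ ∞) (htri : ∀ f g, F (f + g) ≤ C * (F f + F g))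
    {f : ℕ → X → ℝ} (hfin : ∀ n, F (f n) < ∞)
    (hcauchy : ∀ ε : ℝ≥0∞, 0 < ε → ∃ M : ℕ, ∀ m n : ℕ, M ≤ m → M ≤ n → F (f m - f n) < ε)
    {φ : ℕ → ℕ} (hφ : StrictMono φ) {g : X → ℝ}
    (hg : ∀ᵐ x ∂μ, x ∈ S → Tendsto (fun k => f (φ k) x) atTop (𝓝 (g x))) :
    F g < ∞ ∧ Tendsto (fun n => F (f n - g)) atTop (𝓝 0) := by
  have hclose : ∀ ε > 0, ∃ M, ∀ n ≥ M, F (f n - g) ≤ ε ∧ F (g - f n) ≤ ε := by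
    intro ε hε
    obtain ⟨M, hM⟩ := hcauchy ε hε
    have hev : ∀ n ≥ M, ∃ᶠ k in atTop, F (f n - f (φ k)) ≤ ε ∧ F (f (φ k) - f n) ≤ ε :=
      fun n hn => ((hφ.tendsto_atTop.eventually_ge_atTop M).mono fun k hk =>
        ⟨(hM n _ hn hk).le, (hM _ n hk hn).le⟩).frequently
    refine ⟨M, fun n hn => ⟨?_, ?_⟩⟩
    · refine (hfatou _ _ ?_).trans (liminf_le_of_frequently_le' ((hev n hn).mono fun _ hk => hk.1))
      filter_upwards [hg] with x hx hxS using (hx hxS).const_sub (f n x)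
    · refine (hfatou _ _ ?_).trans (liminf_le_of_frequently_le' ((hev n hn).mono fun _ hk => hk.2))
      filter_upwards [hg] with x hx hxS using (hx hxS).sub_const (f n x)
  obtain ⟨M, hM⟩ := hclose 1 one_pos
  refine ⟨?_, ENNReal.tendsto_nhds_zero.2 fun ε hε =>
    eventually_atTop.2 ((hclose ε hε).imp fun _ h n hn => (h n hn).1)⟩
  calc F g = F (f M + (g - f M)) := by rw [add_sub_cancel]
    _ ≤ C * (F (f M) + F (g - f M)) := htri _ _
    _ < ∞ := mul_lt_top hC.lt_top (add_lt_top.2 ⟨hfin M, (hM M le_rfl).2.trans_lt one_lt_top⟩)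

end Completeness

theorem lorentzHerz_complete_general {N : ℕ}
    (Ω : Set (Euc N))
    (a : ℝ) (p q r : ℝ≥0∞) (hq : 0 < q) (hr : 0 < r)
    (f : ℕ → Euc N → ℝ) (hf : ∀ n, Measurable (f n))
    (hfin : ∀ n, herzNorm volume Ω a p q r (f n) < ∞)
    (hcauchy : ∀ ε : ℝ≥0∞, 0 < ε → ∃ M : ℕ, ∀ m n : ℕ, M ≤ m → M ≤ n →
      herzNorm volume Ω a p q r (f m - f n) < ε) :
    ∃ g : Euc N → ℝ, Measurable g ∧ herzNorm volume Ω a p q r g < ∞ ∧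
      Filter.Tendsto (fun n => herzNorm volume Ω a p q r (f n - g))
        Filter.atTop (nhds 0) := by
  have hsmall : ∀ (n : ℕ) (l δ : ℝ), 0 < l → 0 < δ → ∃ ε > 0, ∀ h : Euc N → ℝ,
      herzNorm volume Ω a p q r h < ε →
        volume (annulus Ω (n - 1) ∩ {x | l < |h x|}) ≤ ENNReal.ofReal δ := fun n l δ hl hδ =>
    ⟨_, ENNReal.mul_pos (ENNReal.ofReal_pos.2 (by positivity)).ne'
      (lorentzNormOf_indicator_pos p r hl hδ).ne',
      fun _ => measure_annulus_inter_le_of_herzNorm_lt Ω a q volume p r hq.ne' (by omega)⟩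
  obtain ⟨φ, hφ, hae⟩ := exists_subseq_ae_cauchySeq hsmall hcauchy
  set g : Euc N → ℝ := fun x => limUnder atTop fun k => f (φ k) x
  have hlim : ∀ᵐ x ∂volume, x ∈ Ω → Tendsto (fun k => f (φ k) x) atTop (𝓝 (g x)) := by
    filter_upwards [hae] with x hx hxΩ
    exact tendsto_nhds_limUnder (cauchySeq_tendsto_of_complete (hx (subset_iUnion_annulus Ω hxΩ)))
  obtain ⟨C, hC, htri⟩ := herzNorm_add_le Ω a q volume p r hr.ne'
  exact ⟨g, (StronglyMeasurable.limUnder fun k => (hf (φ k)).stronglyMeasurable).measurable,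
    lt_top_and_tendsto_of_fatou (fun _ _ => herzNorm_le_liminf Ω a q volume p r) hC htri hfin
      hcauchy hφ hlim⟩

/-- For `a ∈ ℝ`, `0 < p < ∞` and `0 < q, r ≤ ∞`, the space
`HL^{a,r}_{p,q}(Ω)` is complete: every Cauchy sequence for the quasi-norm
converges, in quasi-norm, to an element of the space. -/
theorem lorentzHerz_complete {N : ℕ} (hN : 1 ≤ N)
    (Ω : Set (Euc N)) (hΩ : MeasurableSet Ω)
    (a : ℝ) (p q r : ℝ≥0∞) (hp0 : 0 < p) (hp : p ≠ ∞) (hq : 0 < q) (hr : 0 < r)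
    (f : ℕ → Euc N → ℝ) (hf : ∀ n, Measurable (f n))
    (hfin : ∀ n, herzNorm volume Ω a p q r (f n) < ∞)
    (hcauchy : ∀ ε : ℝ≥0∞, 0 < ε → ∃ M : ℕ, ∀ m n : ℕ, M ≤ m → M ≤ n →
      herzNorm volume Ω a p q r (f m - f n) < ε) :
    ∃ g : Euc N → ℝ, Measurable g ∧ herzNorm volume Ω a p q r g < ∞ ∧
      Filter.Tendsto (fun n => herzNorm volume Ω a p q r (f n - g))
        Filter.atTop (nhds 0) :=
  lorentzHerz_complete_general Ω a p q r hq hr f hf hfin hcauchy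
end

section
/- Let 0 < p, q, r < ∞ and a > 0. Then there exists a Lebesgue-measurable set E ⊆ ℝ with finite Lebesgue measure such that ‖χ_E‖_{HL^{a,r}_{p,q}(ℝ)} = ∞. (Concretely, E = ⋃_{u≥1} B_u with B_u = {x ∈ ℝ : 2^u − 1/u² ≤ |x| < 2^u} has measure Σ_{u≥1} 2/u² < ∞, yet Σ_{u≥1} 2^{uaq} (2/u²)^{q/p} = ∞.) In particular, the Lorentz–Herz spaces are not Banach function spaces in general. -/
open MeasureTheory ENNReal Set Filter Topology

/-!
Put an interval of length `ρⁿ`, `ρ = 2^{-ap}`, at the left end of the annulus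
`2ⁿ ≤ |x| < 2ⁿ⁺¹`. The lengths are summable, so their union `E` has finite measure. On the
other hand `f* = 1` on `(0, |B|)` for `f = χ_B`, whence `‖χ_B‖_{L^{p,r}} ≳ |B|^{1/p}`, and every
term `2^{(n+1)a} ‖χ_{E ∩ A_{n+1}}‖_{L^{p,r}} ≳ 2^{(n+1)a} ρ^{n/p} = 2^a` of the Herz sum is bounded
below by the same positive constant.
-/

section LorentzIndicator

variable {X : Type*}

theorem setOf_lt_ofReal_abs_indicator_one (B : Set X) (α : ℝ≥0∞) :
    {x | α < ENNReal.ofReal |B.indicator (fun _ => (1 : ℝ)) x|} = if α < 1 then B else ∅ := by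
  ext x
  by_cases hx : x ∈ B <;> split_ifs with hα <;> simp [hx, hα]

variable [MeasurableSpace X]

theorem rearr_indicator_one_of_lt (μ : Measure X) {B : Set X} {s : ℝ}
    (hs : ENNReal.ofReal s < μ B) : rearr μ (B.indicator fun _ => (1 : ℝ)) s = 1 := by
  have hlevel : {α : ℝ≥0∞ | μ {x | α < ENNReal.ofReal |B.indicator (fun _ => (1 : ℝ)) x|}
      ≤ ENNReal.ofReal s} = Ici 1 := by
    ext α
    simp only [setOf_lt_ofReal_abs_indicator_one, mem_ofPred_eq, mem_Ici]
    split_ifs with hα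
    · simpa [hα.not_ge] using hs
    · simpa using hα
  rw [rearr, hlevel, csInf_Ici]

theorem lorentzNormOf_ge_of_one_le {R : ℝ → ℝ≥0∞} (p : ℝ≥0∞) {r : ℝ≥0∞} (hr0 : 0 < r)
    (hr : r ≠ ∞) {m : ℝ} (hm : 0 < m) (hR : ∀ t ∈ Ioo (m / 2) m, 1 ≤ R t) :
    ENNReal.ofReal ((m / 2) ^ p.toReal⁻¹ * 2⁻¹ ^ r.toReal⁻¹) ≤ lorentzNormOf R p r := by
  have hrt : 0 < r.toReal := ENNReal.toReal_pos hr0.ne' hr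
  set A : ℝ := (m / 2) ^ p.toReal⁻¹
  have hA : 0 ≤ A := by positivity
  have hbound : ∀ t ∈ Ioo (m / 2) m, ENNReal.ofReal (A ^ r.toReal / m)
      ≤ (ENNReal.ofReal (t ^ p.toReal⁻¹) * R t) ^ r.toReal / ENNReal.ofReal t := by
    intro t ht
    rw [ENNReal.ofReal_div_of_pos hm, ← ENNReal.ofReal_rpow_of_nonneg hA hrt.le]
    gcongr
    · exact le_mul_of_le_of_one_le (ENNReal.ofReal_le_ofReal
        (Real.rpow_le_rpow (by positivity) ht.1.le (by positivity))) (hR t ht)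
    · exact ht.2.le
  have hpow : (A * 2⁻¹ ^ r.toReal⁻¹) ^ r.toReal = A ^ r.toReal / m * (m - m / 2) := by
    rw [Real.mul_rpow hA (by positivity), Real.rpow_inv_rpow (by positivity) hrt.ne']
    field_simp
    ring
  rw [lorentzNormOf, if_neg hr, ENNReal.le_rpow_inv_iff hrt,
    ENNReal.ofReal_rpow_of_nonneg (by positivity) hrt.le, hpow,
    ENNReal.ofReal_mul (by positivity), ← Real.volume_Ioo, ← setLIntegral_const]
  calc ∫⁻ _ in Ioo (m / 2) m, ENNReal.ofReal (A ^ r.toReal / m)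
      ≤ ∫⁻ t in Ioo (m / 2) m, (ENNReal.ofReal (t ^ p.toReal⁻¹) * R t) ^ r.toReal
          / ENNReal.ofReal t := setLIntegral_mono' measurableSet_Ioo hbound
    _ ≤ _ := lintegral_mono_set fun t ht => (half_pos hm).trans ht.1

theorem lorentzNorm_indicator_one_ge (μ : Measure X) (p : ℝ≥0∞) {r : ℝ≥0∞} (hr0 : 0 < r)
    (hr : r ≠ ∞) {B : Set X} {m : ℝ} (hm : 0 < m) (hB : ENNReal.ofReal m ≤ μ B) :
    ENNReal.ofReal ((m / 2) ^ p.toReal⁻¹ * 2⁻¹ ^ r.toReal⁻¹)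
      ≤ lorentzNorm μ p r (B.indicator fun _ => (1 : ℝ)) :=
  lorentzNormOf_ge_of_one_le p hr0 hr hm fun _ ht => (rearr_indicator_one_of_lt μ
    (((ENNReal.ofReal_lt_ofReal_iff hm).2 ht.2).trans_le hB)).ge

end LorentzIndicator

theorem herzNormWith_eq_top_of_le {X E : Type*} [Norm X] [Zero E] (Ω : Set X) (a : ℝ)
    {q : ℝ≥0∞} (hq0 : 0 < q) (hq : q ≠ ∞) (L : (X → E) → ℝ≥0∞) (f : X → E) {c : ℝ≥0∞}
    (hc : c ≠ 0)
    (h : ∀ n : ℕ, c ≤ ENNReal.ofReal ((2 : ℝ) ^ ((((n : ℤ) + 1 : ℤ) : ℝ) * a)) *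
      L ((annulus Ω ((n : ℤ) + 1)).indicator f)) :
    herzNormWith Ω a q L f = ∞ := by
  have hqt : 0 < q.toReal := ENNReal.toReal_pos hq0.ne' hq
  set F : {u : ℤ // -1 ≤ u} → ℝ≥0∞ := fun u =>
    (ENNReal.ofReal ((2 : ℝ) ^ ((u.1 : ℝ) * a)) * L ((annulus Ω u.1).indicator f)) ^ q.toReal
  have hsum : ∑' u, F u = ∞ := by
    refine eq_top_iff.2 ?_
    calc (⊤ : ℝ≥0∞) = ∑' _ : ℕ, c ^ q.toReal :=
          (ENNReal.tsum_const_eq_top_of_ne_zero (by simp [hc, hqt])).symm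
      _ ≤ ∑' n : ℕ, F ⟨(n : ℤ) + 1, by omega⟩ :=
          ENNReal.tsum_le_tsum fun n => ENNReal.rpow_le_rpow (h n) hqt.le
      _ ≤ ∑' u, F u :=
          ENNReal.tsum_comp_le_tsum_of_injective (fun m n hmn => by simpa using hmn) F
  rw [herzNormWith, if_neg hq, hsum, ENNReal.top_rpow_of_pos (inv_pos.2 hqt)]

theorem annulus_univ_inter_iUnion_Ico {ℓ : ℕ → ℝ} (hℓ : ∀ k, ℓ k ≤ 2 ^ k) (n : ℕ) :
    annulus (univ : Set ℝ) ((n : ℤ) + 1) ∩ ⋃ k, Ico (2 ^ k) (2 ^ k + ℓ k)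
      = Ico (2 ^ n) (2 ^ n + ℓ n) := by
  have hann : annulus (univ : Set ℝ) ((n : ℤ) + 1) = {x | 2 ^ n ≤ |x| ∧ |x| < 2 ^ (n + 1)} := by
    rw [annulus, if_neg (by omega)]
    ext x
    simp [Real.norm_eq_abs, ← zpow_natCast]
  have hblock : ∀ k, ∀ x ∈ Ico ((2 : ℝ) ^ k) (2 ^ k + ℓ k), 0 < x ∧ x < 2 ^ (k + 1) :=
    fun k x hx => ⟨(pow_pos two_pos k).trans_le hx.1, by linarith [hx.2, hℓ k, pow_succ (2 : ℝ) k]⟩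
  ext x
  simp only [hann, mem_inter_iff, mem_iUnion, mem_ofPred_eq]
  constructor
  · rintro ⟨⟨hnx, hxn⟩, k, hk⟩
    obtain ⟨hx0, hxk⟩ := hblock k x hk
    rw [abs_of_pos hx0] at hnx hxn
    have hkn : k < n + 1 := (pow_lt_pow_iff_right₀ (one_lt_two (α := ℝ))).1 (hk.1.trans_lt hxn)
    have hnk : n < k + 1 := (pow_lt_pow_iff_right₀ (one_lt_two (α := ℝ))).1 (hnx.trans_lt hxk)
    obtain rfl : k = n := by omega
    exact hk
  · intro hx
    obtain ⟨hx0, hxn⟩ := hblock n x hx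
    rw [abs_of_pos hx0]
    exact ⟨⟨hx.1, hxn⟩, n, hx⟩

theorem volume_iUnion_Ico_lt_top {x ℓ : ℕ → ℝ} (hℓ0 : ∀ k, 0 ≤ ℓ k) (hℓ : Summable ℓ) :
    volume (⋃ k, Ico (x k) (x k + ℓ k)) < ∞ :=
  calc volume (⋃ k, Ico (x k) (x k + ℓ k)) ≤ ∑' k, ENNReal.ofReal (ℓ k) := by
        simpa only [Real.volume_Ico, add_sub_cancel_left] using measure_iUnion_le (μ := volume) fun k => Ico (x k) (x k + ℓ k)
    _ = ENNReal.ofReal (∑' k, ℓ k) := (ENNReal.ofReal_tsum_of_nonneg hℓ0 hℓ).symm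
    _ < ∞ := ENNReal.ofReal_lt_top

/-- For `0 < p, q, r < ∞` and `a > 0` there is a Lebesgue-measurable
set `E ⊆ ℝ` of finite measure whose characteristic function has infinite
Lorentz–Herz quasi-norm `‖χ_E‖_{HL^{a,r}_{p,q}(ℝ)} = ∞`.  In particular the
Lorentz–Herz spaces are not Banach function spaces in general. -/
theorem lorentzHerz_not_BFS (a : ℝ) (ha : 0 < a) (p q r : ℝ≥0∞)
    (hp0 : 0 < p) (hp : p ≠ ∞) (hq0 : 0 < q) (hq : q ≠ ∞)
    (hr0 : 0 < r) (hr : r ≠ ∞) :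
    ∃ E : Set ℝ, MeasurableSet E ∧ volume E < ∞ ∧
      herzNorm volume (Set.univ : Set ℝ) a p q r (E.indicator fun _ => (1 : ℝ)) = ∞ := by
  have hpt : 0 < p.toReal := ENNReal.toReal_pos hp0.ne' hp
  set ρ : ℝ := 2 ^ (-(a * p.toReal))
  have hρ0 : 0 < ρ := by positivity
  have hρ1 : ρ < 1 := Real.rpow_lt_one_of_one_lt_of_neg one_lt_two (by nlinarith)
  have hρn : ∀ n : ℕ, (ρ ^ n) ^ p.toReal⁻¹ = 2 ^ (-(n * a)) := fun n => by
    rw [← Real.rpow_natCast, ← Real.rpow_mul two_pos.le, ← Real.rpow_mul two_pos.le]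
    field_simp
  have hℓ : ∀ k : ℕ, ρ ^ k ≤ 2 ^ k :=
    fun k => (pow_le_one₀ hρ0.le hρ1.le).trans (one_le_pow₀ one_le_two)
  refine ⟨⋃ k : ℕ, Ico (2 ^ k) (2 ^ k + ρ ^ k), .iUnion fun _ => measurableSet_Ico,
    volume_iUnion_Ico_lt_top (fun k => by positivity) (summable_geometric_of_lt_one hρ0.le hρ1),
    herzNormWith_eq_top_of_le _ _ hq0 hq _ _
      (c := ENNReal.ofReal (2 ^ a * 2⁻¹ ^ p.toReal⁻¹ * 2⁻¹ ^ r.toReal⁻¹))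
      (ENNReal.ofReal_pos.2 (by positivity)).ne' fun n => ?_⟩
  rw [indicator_indicator, annulus_univ_inter_iUnion_Ico hℓ]
  calc ENNReal.ofReal (2 ^ a * 2⁻¹ ^ p.toReal⁻¹ * 2⁻¹ ^ r.toReal⁻¹)
      = ENNReal.ofReal (2 ^ ((((n : ℤ) + 1 : ℤ) : ℝ) * a)) *
          ENNReal.ofReal ((ρ ^ n / 2) ^ p.toReal⁻¹ * 2⁻¹ ^ r.toReal⁻¹) := by
        rw [← ENNReal.ofReal_mul (by positivity), div_eq_mul_inv,
          Real.mul_rpow (by positivity) (by positivity), hρn]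
        push_cast
        rw [add_mul, one_mul, Real.rpow_add two_pos, Real.rpow_neg two_pos.le]
        field_simp
    _ ≤ _ := by
        gcongr
        refine lorentzNorm_indicator_one_ge volume p hr0 hr (by positivity) ?_
        rw [Real.volume_Ico, add_sub_cancel_left]
end
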